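/- arXiv:1405.5162 — 2 statements merged into one kernel-verified Lean document; each statement's English description precedes it below -/
import Mathlib

section
/- Let u be a complex number with |u| = 1 such that u^a ≠ 1 for every nonzero integer a (i.e., u is not a root of unity). Then the sequence (u^n)_{n≥1} is equidistributed on the unit circle with respect to the Haar probability measure: for every continuous function f : circle → ℂ, (1/n)∑_{i=1}^n f(u^i) converges to ∫ f dμ_Haar as n → ∞. -/
/-!
Weyl's criterion. The Cesàro means `g ↦ n⁻¹ ∑ g (u ^ (i + 1))` are functionals of norm at most `1`
on `C(Circle, ℂ)`, hence equicontinuous, so the functions for which they converge to `∫ g ∂μ`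
form a closed subspace. By Stone–Weierstrass the monomials `z ^ k` span a dense subspace, so it
suffices to treat `z ^ k`. For `k = 0` both sides are `1`. For `k ≠ 0` put `w = u ^ k ≠ 1`: the
means are `n⁻¹ ∑ w ^ (i + 1) → 0` because geometric sums with ratio `w` are bounded, and
`∫ z ^ k ∂μ = 0` because translating by `u` multiplies this integral by `w`.
-/

open Filter MeasureTheory Topology

theorem ContinuousLinearMap.tendsto_apply_of_closure_span_eq_top {ι 𝕜 E F : Type*}
    [NontriviallyNormedField 𝕜] [SeminormedAddCommGroup E] [NormedSpace 𝕜 E]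
    [NormedAddCommGroup F] [NormedSpace 𝕜 F] {l : Filter ι} {A : ι → E →L[𝕜] F}
    {L : E →L[𝕜] F} {C : ℝ} (hA : ∀ i, ‖A i‖ ≤ C) {s : Set E}
    (hs : (Submodule.span 𝕜 s).topologicalClosure = ⊤)
    (h : ∀ x ∈ s, Tendsto (A · x) l (𝓝 (L x))) (x : E) :
    Tendsto (A · x) l (𝓝 (L x)) := by
  let S : Submodule 𝕜 E :=
    { carrier := {x | Tendsto (A · x) l (𝓝 (L x))}
      add_mem' := fun hx hy => by simpa using hx.add hy
      zero_mem' := by simpa using tendsto_const_nhds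
      smul_mem' := fun c x hx => by simpa using hx.const_smul c }
  have hA_equicontinuous : Equicontinuous ((↑) ∘ A) :=
    (show (∃ C, ∀ i, ‖A i‖ ≤ C) ↔ _ from (NormedSpace.equicontinuous_TFAE A).out 5 1).1 ⟨C, hA⟩
  have hS : IsClosed (S : Set E) := hA_equicontinuous.isClosed_setOfPred_tendsto L.continuous
  have : ⊤ ≤ S := hs ▸ Submodule.topologicalClosure_minimal _ (Submodule.span_le.2 h) hS
  exact this trivial

theorem integral_eq_zero_of_mul_left_eq_smul {G 𝕜 E : Type*} [Group G] [MeasurableSpace G]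
    [MeasurableMul G] [NontriviallyNormedField 𝕜] [NormedAddCommGroup E] [NormedSpace ℝ E]
    [NormedSpace 𝕜 E] [SMulCommClass ℝ 𝕜 E] {μ : Measure G} [μ.IsMulLeftInvariant]
    {f : G → E} {g : G} {c : 𝕜} (hc : c ≠ 1) (hf : ∀ x, f (g * x) = c • f x) :
    ∫ x, f x ∂μ = 0 := by
  have h : (c - 1) • ∫ x, f x ∂μ = 0 := by
    rw [sub_smul, one_smul, sub_eq_zero, ← integral_smul]
    simp_rw [← hf, integral_mul_left_eq_self f g]
  exact (smul_eq_zero.1 h).resolve_left (sub_ne_zero.2 hc)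

theorem tendsto_inv_mul_geom_sum_zero {𝕜 : Type*} [RCLike 𝕜] {w : 𝕜} (hw : ‖w‖ ≤ 1)
    (hw₁ : w ≠ 1) :
    Tendsto (fun n : ℕ => (n : 𝕜)⁻¹ * ∑ i ∈ Finset.range n, w ^ i) atTop (𝓝 0) := by
  refine (tendsto_inv_atTop_nhds_zero_nat (𝕜 := 𝕜)).zero_mul_isBoundedUnder_le
    (isBoundedUnder_of ⟨2 / ‖w - 1‖, fun n => ?_⟩)
  have : ‖w ^ n - 1‖ ≤ 2 := calc
    ‖w ^ n - 1‖ ≤ ‖w‖ ^ n + 1 := by simpa using norm_sub_le (w ^ n) 1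
    _ ≤ 2 := by linarith [pow_le_one₀ (norm_nonneg w) hw (n := n)]
  simp only [Function.comp_apply, geom_sum_eq hw₁, norm_div]
  gcongr

namespace ContinuousMap

variable {X : Type*} [TopologicalSpace X]

noncomputable def sampleMean (x : ℕ → X) (n : ℕ) : C(X, ℂ) →L[ℂ] ℂ :=
  (n : ℂ)⁻¹ • ∑ i ∈ Finset.range n, evalCLM ℂ (x i)

@[simp]
lemma sampleMean_apply (x : ℕ → X) (n : ℕ) (g : C(X, ℂ)) :
    sampleMean x n g = (n : ℂ)⁻¹ * ∑ i ∈ Finset.range n, g (x i) := by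
  simp [sampleMean]

lemma tendsto_sampleMean_one (x : ℕ → X) : Tendsto (sampleMean x · 1) atTop (𝓝 1) :=
  tendsto_const_nhds.congr' <| (eventually_ne_atTop 0).mono fun n hn => by simp [hn]

variable [CompactSpace X]

lemma norm_sampleMean_le (x : ℕ → X) (n : ℕ) : ‖sampleMean x n‖ ≤ 1 := by
  refine ContinuousLinearMap.opNorm_le_bound _ zero_le_one fun g => ?_
  rw [sampleMean_apply, norm_mul, norm_inv, Complex.norm_natCast, one_mul]
  rcases eq_or_ne n 0 with rfl | hn
  · simp
  calc (n : ℝ)⁻¹ * ‖∑ i ∈ Finset.range n, g (x i)‖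
      ≤ (n : ℝ)⁻¹ * ∑ _i ∈ Finset.range n, ‖g‖ := by
        gcongr
        exact (norm_sum_le _ _).trans (Finset.sum_le_sum fun i _ => g.norm_coe_le_norm _)
    _ = ‖g‖ := by simp [hn]

variable [MeasurableSpace X] [OpensMeasurableSpace X]

lemma integrable (μ : Measure X) [IsFiniteMeasure μ] (g : C(X, ℂ)) : Integrable g μ :=
  (BoundedContinuousFunction.mkOfCompact g).integrable μ

noncomputable def integralCLM (μ : Measure X) [IsProbabilityMeasure μ] : C(X, ℂ) →L[ℂ] ℂ :=
  LinearMap.mkContinuous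
    { toFun g := ∫ x, g x ∂μ
      map_add' g h := integral_add (g.integrable μ) (h.integrable μ)
      map_smul' c g := integral_smul c g }
    1 fun g => by
      simpa using (BoundedContinuousFunction.mkOfCompact g).norm_integral_le_norm μ

@[simp]
lemma integralCLM_apply (μ : Measure X) [IsProbabilityMeasure μ] (g : C(X, ℂ)) :
    integralCLM μ g = ∫ x, g x ∂μ := rfl

end ContinuousMap

namespace Circle

noncomputable def monomial (k : ℤ) : C(Circle, ℂ) :=
  ⟨fun z => ↑(z ^ k), continuous_subtype_val.comp (continuous_zpow k)⟩

@[simp]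
lemma monomial_apply (k : ℤ) (z : Circle) : monomial k z = (z : ℂ) ^ k := rfl

lemma monomial_zero : monomial 0 = 1 := by ext; simp

lemma monomial_add (k m : ℤ) : monomial (k + m) = monomial k * monomial m := by
  ext z; simp [zpow_add₀ z.coe_ne_zero]

lemma star_monomial (k : ℤ) : star (monomial k) = monomial (-k) := by
  ext z
  change starRingEnd ℂ ↑(z ^ k) = ↑(z ^ (-k))
  rw [zpow_neg, coe_inv_eq_conj]

noncomputable def monomialSubalgebra : StarSubalgebra ℂ C(Circle, ℂ) where
  toSubalgebra := Algebra.adjoin ℂ (Set.range monomial)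
  star_mem' := by
    change Algebra.adjoin ℂ (Set.range monomial) ≤ star (Algebra.adjoin ℂ (Set.range monomial))
    refine Algebra.adjoin_le ?_
    rintro - ⟨k, rfl⟩
    exact Algebra.subset_adjoin ⟨-k, (star_monomial k).symm ▸ rfl⟩

lemma monomialSubalgebra_toSubmodule :
    Subalgebra.toSubmodule monomialSubalgebra.toSubalgebra =
      Submodule.span ℂ (Set.range monomial) := by
  apply Algebra.adjoin_eq_span_of_subset
  refine subset_trans (fun x hx => ?_) Submodule.subset_span
  induction hx using Submonoid.closure_induction with
  | mem x hx => exact hx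
  | one => exact ⟨0, monomial_zero⟩
  | mul _ _ _ _ hx hy =>
    obtain ⟨⟨k, rfl⟩, ⟨m, rfl⟩⟩ := And.intro hx hy
    exact ⟨k + m, monomial_add k m⟩

lemma monomialSubalgebra_separatesPoints : monomialSubalgebra.SeparatesPoints := by
  intro z w hzw
  refine ⟨_, ⟨monomial 1, Algebra.subset_adjoin ⟨1, rfl⟩, rfl⟩, ?_⟩
  simpa using coe_injective.ne hzw

lemma span_monomial_closure_eq_top :
    (Submodule.span ℂ (Set.range monomial)).topologicalClosure = ⊤ := by
  rw [← monomialSubalgebra_toSubmodule]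
  exact congr_arg (Subalgebra.toSubmodule <| StarSubalgebra.toSubalgebra ·)
    (ContinuousMap.starSubalgebra_topologicalClosure_eq_top_of_separatesPoints _
      monomialSubalgebra_separatesPoints)

lemma integral_monomial_eq_zero [MeasurableSpace Circle] [BorelSpace Circle]
    (μ : Measure Circle) [μ.IsMulLeftInvariant] {u : Circle} {k : ℤ} (hu : u ^ k ≠ 1) :
    ∫ z, monomial k z ∂μ = 0 :=
  integral_eq_zero_of_mul_left_eq_smul (g := u) (c := ((u ^ k : Circle) : ℂ))
    (coe_eq_one.not.2 hu) fun z => by simp [mul_zpow]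

lemma tendsto_sampleMean_monomial_of_pow_ne_one {u : Circle} {k : ℤ} (hu : u ^ k ≠ 1) :
    Tendsto (ContinuousMap.sampleMean (fun i => u ^ (i + 1)) · (monomial k)) atTop (𝓝 0) := by
  set w : ℂ := (u : ℂ) ^ k
  have hw (i : ℕ) : monomial k (u ^ (i + 1)) = w * w ^ i := by
    rw [monomial_apply, coe_pow, ← zpow_natCast, ← zpow_mul, mul_comm, zpow_mul, zpow_natCast,
      pow_succ']
  simp only [ContinuousMap.sampleMean_apply, hw, ← Finset.mul_sum, mul_left_comm _ w]
  simpa using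
    (tendsto_inv_mul_geom_sum_zero (by simp [norm_coe]) (coe_eq_one.not.2 hu)).const_mul w

end Circle

/-- **Equidistribution of powers of a non-root-of-unity point on the circle.**
If `u` lies on the unit circle and `u ^ a ≠ 1` for every nonzero integer `a`, then the
sequence `(u^n)_{n ≥ 1}` is equidistributed on the circle with respect to the Haar
probability measure. -/
theorem stmt_1 [MeasurableSpace Circle] [BorelSpace Circle] (u : Circle) (hu : ∀ a : ℤ, a ≠ 0 → u ^ a ≠ 1)
    (μ : Measure Circle) [μ.IsHaarMeasure] [IsProbabilityMeasure μ]
    (f : Circle → ℂ) (hf : Continuous f) :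
    Tendsto (fun n : ℕ => (n : ℂ)⁻¹ * ∑ i ∈ Finset.range n, f (u ^ (i + 1)))
      atTop (nhds (∫ z, f z ∂μ)) := by
  have h_monomial (k : ℤ) :
      Tendsto (ContinuousMap.sampleMean (fun i => u ^ (i + 1)) · (Circle.monomial k)) atTop
        (𝓝 (ContinuousMap.integralCLM μ (Circle.monomial k))) := by
    rcases eq_or_ne k 0 with rfl | hk
    · simpa [Circle.monomial_zero] using ContinuousMap.tendsto_sampleMean_one (fun i => u ^ (i + 1))
    · rw [ContinuousMap.integralCLM_apply, Circle.integral_monomial_eq_zero μ (hu k hk)]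
      exact Circle.tendsto_sampleMean_monomial_of_pow_ne_one (hu k hk)
  have h := ContinuousLinearMap.tendsto_apply_of_closure_span_eq_top
    (ContinuousMap.norm_sampleMean_le _) Circle.span_monomial_closure_eq_top
    (by rintro _ ⟨k, rfl⟩; exact h_monomial k) ⟨f, hf⟩
  simpa only [ContinuousMap.sampleMean_apply, ContinuousMap.integralCLM_apply,
    ContinuousMap.coe_mk] using h
end

section
/- (Kubota's rank lemma) Let k, g ≥ 1 and let D be a k×g matrix over ℚ that has at least one column all of whose entries equal 1. Let U denote the k×g matrix all of whose entries equal 1. Then the 2k×2g block matrix D̄ = [[D, U−D],[U−D, D]] satisfies rank(D̄) = rank(D) + 1. -/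
/-!
Adding the first block row of `[[D, U - D], [U - D, D]]` to the second, and then performing the
block column operations `C₂ ↦ C₂ + C₁ (1 - E)` and `C₁ ↦ C₁ - C₂`, gives `[[D, 0], [0, U]]`,
where `E` copies the all-ones column of `D` into every column, so that `D E = U = U E`.
Hence the rank is `rank D + rank U = rank D + 1`.
-/

open Matrix Module

theorem Submodule.finrank_prod {K M M' : Type*} [DivisionRing K] [AddCommGroup M] [Module K M]
    [AddCommGroup M'] [Module K M'] (p : Submodule K M) (q : Submodule K M')
    [FiniteDimensional K p] [FiniteDimensional K q] :
    finrank K (p.prod q) = finrank K p + finrank K q := by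
  have hinj : Function.Injective (p.subtype.prodMap q.subtype) :=
    Prod.map_injective.mpr ⟨p.injective_subtype, q.injective_subtype⟩
  have hrange : LinearMap.range (p.subtype.prodMap q.subtype) = p.prod q := by
    rw [LinearMap.range_prodMap, Submodule.range_subtype, Submodule.range_subtype]
  calc finrank K (p.prod q) = finrank K (p × q) := by
        rw [← hrange]; exact (LinearEquiv.ofInjective _ hinj).finrank_eq.symm
    _ = finrank K p + finrank K q := Module.finrank_prod

namespace Matrix

variable {K : Type*} [Field K] {m n m' n' : Type*} [Fintype n] [Fintype n']

theorem mulVecLin_fromBlocks_zero_zero (A : Matrix m n K) (B : Matrix m' n' K) :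
    (fromBlocks A 0 0 B).mulVecLin =
      (LinearEquiv.sumArrowLequivProdArrow m m' K K).symm.toLinearMap ∘ₗ
        A.mulVecLin.prodMap B.mulVecLin ∘ₗ
          (LinearEquiv.sumArrowLequivProdArrow n n' K K).toLinearMap := by
  refine LinearMap.ext fun x => ?_
  ext (i | i) <;> simp [fromBlocks_mulVec] <;> rfl

theorem rank_fromBlocks_zero_zero (A : Matrix m n K) (B : Matrix m' n' K) :
    (fromBlocks A 0 0 B).rank = A.rank + B.rank := by
  rw [rank, mulVecLin_fromBlocks_zero_zero, LinearMap.range_comp,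
    LinearMap.range_comp_of_range_eq_top _ (LinearEquiv.range _), LinearEquiv.finrank_map_eq,
    LinearMap.range_prodMap, Submodule.finrank_prod, rank, rank]

theorem rank_vecMulVec_eq_one {w : m → K} {v : n → K} (hw : w ≠ 0) (hv : v ≠ 0) :
    (vecMulVec w v).rank = 1 := by
  classical
  obtain ⟨j, hj⟩ : ∃ j, v j ≠ 0 := Function.ne_iff.mp hv
  refine le_antisymm (rank_vecMulVec_le w v) (Submodule.one_le_finrank_iff.mpr ?_)
  refine (Submodule.ne_bot_iff _).mpr ⟨vecMulVec w v *ᵥ Pi.single j 1, ⟨_, rfl⟩, ?_⟩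
  rw [vecMulVec_mulVec]
  simp [hj, hw]

theorem rank_fromBlocks_sub_sub_of_mul_eq [DecidableEq n] [Fintype m] [DecidableEq m]
    (D U : Matrix m n K) (E : Matrix n n K) (hDE : D * E = U) (hUE : U * E = U) :
    (fromBlocks D (U - D) (U - D) D).rank = D.rank + U.rank := by
  let P : Matrix (m ⊕ m) (m ⊕ m) K := fromBlocks 1 0 1 1
  let Q₁ : Matrix (n ⊕ n) (n ⊕ n) K := fromBlocks 1 (1 - E) 0 1
  let Q₂ : Matrix (n ⊕ n) (n ⊕ n) K := fromBlocks 1 0 (-1) 1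
  have hreduce : P * fromBlocks D (U - D) (U - D) D * Q₁ * Q₂ = fromBlocks D 0 0 U := by
    simp only [P, Q₁, Q₂, fromBlocks_multiply, Matrix.mul_sub, Matrix.sub_mul, Matrix.add_mul,
      Matrix.mul_one, Matrix.one_mul, Matrix.mul_zero, Matrix.zero_mul, Matrix.mul_neg]
    simp only [hDE, hUE]
    congr 1 <;> abel
  have hP : IsUnit P.det := by simp [P]
  have hQ₁ : IsUnit Q₁.det := by simp [Q₁]
  have hQ₂ : IsUnit Q₂.det := by simp [Q₂]
  rw [← rank_fromBlocks_zero_zero, ← hreduce, rank_mul_eq_left_of_isUnit_det _ _ hQ₂,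
    rank_mul_eq_left_of_isUnit_det _ _ hQ₁, rank_mul_eq_right_of_isUnit_det _ _ hP]

theorem rank_fromBlocks_vecMulVec_sub [DecidableEq n] [Fintype m] [DecidableEq m]
    (D : Matrix m n K) {w : m → K} (hw : w ≠ 0) {j : n} (hj : D.col j = w) :
    (fromBlocks D (vecMulVec w 1 - D) (vecMulVec w 1 - D) D).rank = D.rank + 1 := by
  have hcol : ∀ A : Matrix m n K, A.col j = w →
      A * vecMulVec (Pi.single j (1 : K)) (1 : n → K) = vecMulVec w 1 := by
    intro A hA
    rw [mul_vecMulVec, mulVec_single_one, hA]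
  rw [rank_fromBlocks_sub_sub_of_mul_eq D _ _ (hcol D hj) (hcol _ (by ext; simp)),
    rank_vecMulVec_eq_one hw (Function.ne_iff.mpr ⟨j, one_ne_zero⟩)]

end Matrix

theorem stmt_12_general (k g : ℕ) (hk : 1 ≤ k)
    (D : Matrix (Fin k) (Fin g) ℚ) (hcol : ∃ j : Fin g, ∀ i : Fin k, D i j = 1)
    (U : Matrix (Fin k) (Fin g) ℚ) (hU : ∀ i j, U i j = 1) :
    (Matrix.fromBlocks D (U - D) (U - D) D).rank = D.rank + 1 := by
  obtain ⟨j, hj⟩ := hcol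
  obtain rfl : U = vecMulVec 1 1 := by ext; simp [hU]
  have hone : (1 : Fin k → ℚ) ≠ 0 := Function.ne_iff.mpr ⟨⟨0, hk⟩, one_ne_zero⟩
  exact rank_fromBlocks_vecMulVec_sub D hone (funext hj)

/-- **Kubota's rank lemma.**  Let `D` be a `k × g` matrix over `ℚ` with at least one column
all of whose entries equal `1`, and let `U` be the `k × g` all-ones matrix.  Then the
`2k × 2g` block matrix `[[D, U - D], [U - D, D]]` has rank `rank(D) + 1`. -/
theorem stmt_12 (k g : ℕ) (hk : 1 ≤ k) (hg : 1 ≤ g)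
    (D : Matrix (Fin k) (Fin g) ℚ) (hcol : ∃ j : Fin g, ∀ i : Fin k, D i j = 1)
    (U : Matrix (Fin k) (Fin g) ℚ) (hU : ∀ i j, U i j = 1) :
    (Matrix.fromBlocks D (U - D) (U - D) D).rank = D.rank + 1 :=
  stmt_12_general k g hk D hcol U hU
end
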